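/- (Lemma 1, eigenvalue bounds for the primal Hessian inverse approximation.) Let W ∈ ℝ^{n×n} be a symmetric row-stochastic matrix with nonnegative entries satisfying null(I−W) = span{1} and diagonal entries δ < w_ii < Δ for constants 0 < δ < Δ < 1, let Z := W ⊗ I_p, and let Z_∅ denote the block-diagonal part of Z (the matrix containing only the diagonal blocks w_ii I_p). Let B ∈ ℝ^{np×np} be a symmetric block-diagonal matrix satisfying ψ I ⪯ B ⪯ Ψ I for constants 0 < ψ < Ψ, let α > 0, set D := B + 2α(I − Z_∅), and for an integer K ≥ 0 define the truncated-series inverse approximation G⁻¹_K := D^{−1/2} [Σ_{k=0}^{K} ( D^{−1/2} α(I − 2Z_∅ + Z) D^{−1/2} )^k ] D^{−1/2}. Then λ I ⪯ G⁻¹_K ⪯ Λ I, where λ := 1/(2α(1−δ) + Ψ), ρ := 2α(1−δ)/(2α(1−δ) + ψ), and Λ := (1 − ρ^{K+1}) / ((1−ρ)(2α(1−Δ) + ψ)). -/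

import Mathlib

open Matrix
open scoped Kronecker

lemma quad_aux {n p : ℕ} (W : Matrix (Fin n) (Fin n) ℝ)
    (hrow : ∀ i, ∑ j, W i j = 1) (hcol : ∀ j, ∑ i, W i j = 1)
    (x : Fin n × Fin p → ℝ) (t : ℝ) :
    ∑ i, ∑ i', ∑ j, W i i' * (x (i, j) + t * x (i', j)) ^ 2
      = (1 + t ^ 2) * (∑ q, x q ^ 2)
        + 2 * t * (∑ i, ∑ i', ∑ j, W i i' * (x (i, j) * x (i', j))) := by
  have e1 : ∑ i, ∑ i', W i i' * ∑ j, x (i, j) ^ 2 = ∑ q, x q ^ 2 := by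
    rw [Fintype.sum_prod_type]
    refine Finset.sum_congr rfl fun i _ => ?_
    rw [← Finset.sum_mul, hrow i, one_mul]
  have e2 : ∑ i, ∑ i', W i i' * ∑ j, x (i', j) ^ 2 = ∑ q, x q ^ 2 := by
    rw [Finset.sum_comm, Fintype.sum_prod_type]
    refine Finset.sum_congr rfl fun i' _ => ?_
    rw [← Finset.sum_mul, hcol i', one_mul]
  have expand : ∀ i i', ∑ j, W i i' * (x (i, j) + t * x (i', j)) ^ 2
      = (∑ j, W i i' * x (i, j) ^ 2) + t ^ 2 * (∑ j, W i i' * x (i', j) ^ 2)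
        + 2 * t * (∑ j, W i i' * (x (i, j) * x (i', j))) := by
    intro i i'
    rw [Finset.mul_sum, Finset.mul_sum, ← Finset.sum_add_distrib, ← Finset.sum_add_distrib]
    exact Finset.sum_congr rfl fun j _ => by ring
  simp_rw [expand, Finset.sum_add_distrib, ← Finset.mul_sum]
  rw [e1, e2]
  ring

lemma quad_one {n p : ℕ} (x : Fin n × Fin p → ℝ) :
    x ⬝ᵥ ((1 : Matrix (Fin n × Fin p) (Fin n × Fin p) ℝ) *ᵥ x) = ∑ q, x q ^ 2 := by
  rw [Matrix.one_mulVec]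
  simp [dotProduct, sq]

lemma quad_diag {n p : ℕ} (W : Matrix (Fin n) (Fin n) ℝ) (x : Fin n × Fin p → ℝ) :
    x ⬝ᵥ ((Matrix.diagonal fun q : Fin n × Fin p => W q.1 q.1) *ᵥ x)
      = ∑ i, ∑ j, W i i * x (i, j) ^ 2 := by
  simp only [dotProduct, Matrix.mulVec_diagonal]
  rw [Fintype.sum_prod_type]
  exact Finset.sum_congr rfl fun i _ => Finset.sum_congr rfl fun j _ => by ring

lemma quad_kron {n p : ℕ} (W : Matrix (Fin n) (Fin n) ℝ) (x : Fin n × Fin p → ℝ) :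
    x ⬝ᵥ ((W ⊗ₖ (1 : Matrix (Fin p) (Fin p) ℝ)) *ᵥ x)
      = ∑ i, ∑ i', ∑ j, W i i' * (x (i, j) * x (i', j)) := by
  simp only [dotProduct, Matrix.mulVec, Matrix.kroneckerMap_apply, Matrix.one_apply]
  rw [Fintype.sum_prod_type]
  refine Finset.sum_congr rfl fun i _ => ?_
  rw [Finset.sum_comm]
  refine Finset.sum_congr rfl fun i' _ => ?_
  rw [Fintype.sum_prod_type]
  simp only [mul_ite, ite_mul, mul_zero, zero_mul, mul_one, Finset.sum_ite_eq, Finset.mem_univ,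
    if_true]
  rw [Finset.mul_sum]
  exact Finset.sum_congr rfl fun i'' _ => by ring

lemma kron_conjTranspose {n p : ℕ} (W : Matrix (Fin n) (Fin n) ℝ) (hsymm : W.IsSymm) :
    (W ⊗ₖ (1 : Matrix (Fin p) (Fin p) ℝ))ᴴ = W ⊗ₖ (1 : Matrix (Fin p) (Fin p) ℝ) := by
  have hWs : ∀ i i', W i' i = W i i' := fun i i' => congrFun (congrFun hsymm i) i'
  ext ⟨i, j⟩ ⟨i', j'⟩
  simp only [Matrix.conjTranspose_apply, Matrix.kroneckerMap_apply, Matrix.one_apply, star_trivial]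
  rw [hWs]
  by_cases h : j = j' <;> simp [h, eq_comm]

lemma one_sub_kron_psd {n p : ℕ} (W : Matrix (Fin n) (Fin n) ℝ)
    (hsymm : W.IsSymm) (hnonneg : ∀ i j, 0 ≤ W i j)
    (hrow : ∀ i, ∑ j, W i j = 1) (hcol : ∀ j, ∑ i, W i j = 1) :
    ((1 : Matrix (Fin n × Fin p) (Fin n × Fin p) ℝ)
      - W ⊗ₖ (1 : Matrix (Fin p) (Fin p) ℝ)).PosSemidef := by
  refine posSemidef_iff_dotProduct_mulVec.mpr ⟨?_, fun x => ?_⟩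
  · unfold Matrix.IsHermitian
    rw [Matrix.conjTranspose_sub, Matrix.conjTranspose_one, kron_conjTranspose W hsymm]
  · have hx : star x = x := by funext q; exact star_trivial _
    rw [hx, Matrix.sub_mulVec, dotProduct_sub, quad_one, quad_kron]
    have hkey := quad_aux W hrow hcol x (-1)
    have hpos : 0 ≤ ∑ i, ∑ i', ∑ j, W i i' * (x (i, j) + (-1) * x (i', j)) ^ 2 :=
      Finset.sum_nonneg fun i _ => Finset.sum_nonneg fun i' _ => Finset.sum_nonneg fun j _ =>
        mul_nonneg (hnonneg i i') (sq_nonneg _)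
    nlinarith [hkey, hpos]

lemma M_kron_psd {n p : ℕ} (W : Matrix (Fin n) (Fin n) ℝ)
    (hsymm : W.IsSymm) (hnonneg : ∀ i j, 0 ≤ W i j)
    (hrow : ∀ i, ∑ j, W i j = 1) (hcol : ∀ j, ∑ i, W i j = 1) :
    ((1 : Matrix (Fin n × Fin p) (Fin n × Fin p) ℝ)
      - (2 : ℝ) • (Matrix.diagonal fun q : Fin n × Fin p => W q.1 q.1)
      + W ⊗ₖ (1 : Matrix (Fin p) (Fin p) ℝ)).PosSemidef := by
  refine posSemidef_iff_dotProduct_mulVec.mpr ⟨?_, fun x => ?_⟩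
  · unfold Matrix.IsHermitian
    rw [Matrix.conjTranspose_add, Matrix.conjTranspose_sub, Matrix.conjTranspose_one,
      Matrix.conjTranspose_smul, kron_conjTranspose W hsymm, Matrix.diagonal_conjTranspose]
    simp
  · have hx : star x = x := by funext q; exact star_trivial _
    rw [hx, Matrix.add_mulVec, Matrix.sub_mulVec, Matrix.smul_mulVec, dotProduct_add,
      dotProduct_sub, dotProduct_smul, quad_one, quad_diag, quad_kron, smul_eq_mul]
    have hkey := quad_aux W hrow hcol x 1
    have hb1 : ∀ i, (∑ j, W i i * (x (i, j) + 1 * x (i, j)) ^ 2)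
        ≤ ∑ i', ∑ j, W i i' * (x (i, j) + 1 * x (i', j)) ^ 2 := fun i =>
      Finset.single_le_sum
        (f := fun i' => ∑ j, W i i' * (x (i, j) + 1 * x (i', j)) ^ 2)
        (fun i' _ => Finset.sum_nonneg fun j _ => mul_nonneg (hnonneg i i') (sq_nonneg _))
        (Finset.mem_univ i)
    have hb2 : ∑ i, ∑ j, W i i * (x (i, j) + 1 * x (i, j)) ^ 2
        ≤ ∑ i, ∑ i', ∑ j, W i i' * (x (i, j) + 1 * x (i', j)) ^ 2 :=
      Finset.sum_le_sum fun i _ => hb1 i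
    have hb3 : ∑ i, ∑ j, W i i * (x (i, j) + 1 * x (i, j)) ^ 2
        = 4 * ∑ i, ∑ j, W i i * x (i, j) ^ 2 := by
      rw [Finset.mul_sum]
      refine Finset.sum_congr rfl fun i _ => ?_
      rw [Finset.mul_sum]
      exact Finset.sum_congr rfl fun j _ => by ring
    nlinarith [hkey, hb2, hb3]

open Matrix

variable {ι : Type*} [Fintype ι] [DecidableEq ι]

lemma psd_smul {c : ℝ} {A : Matrix ι ι ℝ} (hc : 0 ≤ c) (hA : A.PosSemidef) :
    (c • A).PosSemidef := by
  refine posSemidef_iff_dotProduct_mulVec.mpr ⟨?_, fun x => ?_⟩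
  · unfold Matrix.IsHermitian
    rw [conjTranspose_smul, hA.1]
    simp
  · rw [smul_mulVec, dotProduct_smul, smul_eq_mul]
    exact mul_nonneg hc (hA.dotProduct_mulVec_nonneg x)

lemma psd_conj {A X : Matrix ι ι ℝ} (hA : A.PosSemidef) (hX : Xᴴ = X) :
    (X * A * X).PosSemidef := by
  have := hA.mul_mul_conjTranspose_same X
  rwa [hX] at this

lemma psd_sum {s : Finset ℕ} {f : ℕ → Matrix ι ι ℝ} (h : ∀ k ∈ s, (f k).PosSemidef) :
    (∑ k ∈ s, f k).PosSemidef := by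
  classical
  induction s using Finset.induction_on with
  | empty => simpa using Matrix.PosSemidef.zero
  | @insert a s' hx ih =>
    rw [Finset.sum_insert hx]
    exact (h a (Finset.mem_insert_self a s')).add
      (ih fun k hk => h k (Finset.mem_insert_of_mem hk))

open scoped MatrixOrder in
lemma psd_pow_bound {E : Matrix ι ι ℝ} {ρ : ℝ} (hρ : 0 ≤ ρ) (hE : E.PosSemidef)
    (h : (ρ • (1 : Matrix ι ι ℝ) - E).PosSemidef) (k : ℕ) :
    (ρ ^ k • (1 : Matrix ι ι ℝ) - E ^ k).PosSemidef := by
  induction k with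
  | zero => simpa using Matrix.PosSemidef.zero
  | succ k ih =>
    set R := CFC.sqrt E with hRdef
    have hR : R.PosSemidef := (CFC.sqrt_nonneg E).posSemidef
    have hRR : R * R = E := CFC.sqrt_mul_sqrt_self E hE.nonneg
    have hcomm : Commute R E := by
      rw [← hRR]; exact (Commute.refl R).mul_right (Commute.refl R)
    have hcomm2 : Commute (R ^ k) (ρ • (1 : Matrix ι ι ℝ) - E) :=
      (((Commute.one_right R).smul_right ρ).sub_right hcomm).pow_left k
    have hfact : (ρ • (1 : Matrix ι ι ℝ) - E) * E ^ k = R ^ k * (ρ • 1 - E) * (R ^ k)ᴴ := by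
      rw [(hR.1.pow k).eq, hcomm2.eq, mul_assoc, ← pow_add, ← two_mul, pow_mul, sq, hRR]
    have hterm : ((ρ • (1 : Matrix ι ι ℝ) - E) * E ^ k).PosSemidef := by
      rw [hfact]; exact h.mul_mul_conjTranspose_same _
    have hid : ρ ^ (k + 1) • (1 : Matrix ι ι ℝ) - E ^ (k + 1)
        = ρ • (ρ ^ k • (1 : Matrix ι ι ℝ) - E ^ k) + (ρ • 1 - E) * E ^ k := by
      rw [Matrix.sub_mul, Matrix.smul_mul, one_mul, pow_succ, pow_succ]
      rw [smul_sub, smul_smul, mul_comm (ρ ^ k) ρ, ← ((Commute.refl E).pow_right k).eq]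
      abel
    rw [hid]
    exact (psd_smul hρ ih).add hterm
set_option maxHeartbeats 1000000 in
/-- Lemma 1: eigenvalue bounds for the truncated-series primal Hessian inverse
approximation `G⁻¹_K = D^{-1/2} (Σ_{k=0}^K (D^{-1/2} α(I - 2Z_∅ + Z) D^{-1/2})^k) D^{-1/2}`,
where `D = B + 2α(I - Z_∅)` and `S` denotes the positive semidefinite square root of
`D⁻¹` (characterized by `S ⪰ 0` and `S * S * D = 1`). -/
theorem primal_hessian_inverse_approx_bounds {n p : ℕ}
    (W : Matrix (Fin n) (Fin n) ℝ)
    (hsymm : W.IsSymm)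
    (hnonneg : ∀ i j, 0 ≤ W i j)
    (hrow : ∀ i, ∑ j, W i j = 1)
    (hnull : ∀ v : Fin n → ℝ, (1 - W).mulVec v = 0 ↔ ∃ c : ℝ, v = fun _ => c)
    (δ Δ : ℝ) (hδ0 : 0 < δ) (hδΔ : δ < Δ) (hΔ1 : Δ < 1)
    (hdiag : ∀ i, δ < W i i ∧ W i i < Δ)
    (Z Zdiag : Matrix (Fin n × Fin p) (Fin n × Fin p) ℝ)
    (hZ : Z = W ⊗ₖ (1 : Matrix (Fin p) (Fin p) ℝ))
    (hZdiag : Zdiag = Matrix.diagonal fun q : Fin n × Fin p => W q.1 q.1)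
    (B : Matrix (Fin n × Fin p) (Fin n × Fin p) ℝ)
    (hBsymm : B.IsSymm)
    (hBblock : ∀ q r : Fin n × Fin p, q.1 ≠ r.1 → B q r = 0)
    (ψ Ψ : ℝ) (hψ0 : 0 < ψ) (hψΨ : ψ < Ψ)
    (hBlow : (B - ψ • (1 : Matrix (Fin n × Fin p) (Fin n × Fin p) ℝ)).PosSemidef)
    (hBup : (Ψ • (1 : Matrix (Fin n × Fin p) (Fin n × Fin p) ℝ) - B).PosSemidef)
    (α : ℝ) (hα : 0 < α) (K : ℕ)
    (S : Matrix (Fin n × Fin p) (Fin n × Fin p) ℝ)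
    (hS : S.PosSemidef)
    (hSS : S * S * (B + (2 * α) • ((1 : Matrix (Fin n × Fin p) (Fin n × Fin p) ℝ) - Zdiag)) = 1) :
    let GinvK := S * (∑ k ∈ Finset.range (K + 1),
        (S * (α • ((1 : Matrix (Fin n × Fin p) (Fin n × Fin p) ℝ) - (2 : ℝ) • Zdiag + Z)) * S) ^ k) * S
    let lam : ℝ := 1 / (2 * α * (1 - δ) + Ψ)
    let rho : ℝ := 2 * α * (1 - δ) / (2 * α * (1 - δ) + ψ)
    let Lam : ℝ := (1 - rho ^ (K + 1)) / ((1 - rho) * (2 * α * (1 - Δ) + ψ))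
    (GinvK - lam • (1 : Matrix (Fin n × Fin p) (Fin n × Fin p) ℝ)).PosSemidef ∧
      (Lam • (1 : Matrix (Fin n × Fin p) (Fin n × Fin p) ℝ) - GinvK).PosSemidef := by
  intro GinvK lam rho Lam
  have hδ1 : δ < 1 := hδΔ.trans hΔ1
  have hd1pos : (0:ℝ) < 2 * α * (1 - δ) := by nlinarith
  have hdenpos : (0:ℝ) < 2 * α * (1 - δ) + ψ := by linarith
  have hdmaxpos : (0:ℝ) < 2 * α * (1 - δ) + Ψ := by linarith
  have hdminpos : (0:ℝ) < 2 * α * (1 - Δ) + ψ := by nlinarith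
  have hrho_eq : rho = 2 * α * (1 - δ) / (2 * α * (1 - δ) + ψ) := rfl
  have hrho0 : 0 ≤ rho := by rw [hrho_eq]; positivity
  have hrho1 : rho < 1 := by rw [hrho_eq, div_lt_one hdenpos]; linarith
  have hrhone : rho ≠ 1 := ne_of_lt hrho1
  -- symmetry infrastructure
  have hWs : ∀ i i', W i' i = W i i' := fun i i' => congrFun (congrFun hsymm i) i'
  have hcol : ∀ j, ∑ i, W i j = 1 := by
    intro j
    calc ∑ i, W i j = ∑ i, W j i := Finset.sum_congr rfl fun i _ => hWs j i
    _ = 1 := hrow j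
  have hZh : Zᴴ = Z := by rw [hZ]; exact kron_conjTranspose W hsymm
  have hZdh : Zdiagᴴ = Zdiag := by rw [hZdiag, Matrix.diagonal_conjTranspose]; simp
  have hBh : Bᴴ = B := by
    rw [Matrix.conjTranspose_eq_transpose_of_trivial]; exact hBsymm
  have hSh : Sᴴ = S := hS.1
  set M : Matrix (Fin n × Fin p) (Fin n × Fin p) ℝ
    := (1 : Matrix (Fin n × Fin p) (Fin n × Fin p) ℝ) - (2:ℝ) • Zdiag + Z with hMdef
  set D : Matrix (Fin n × Fin p) (Fin n × Fin p) ℝ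
    := B + (2 * α) • ((1 : Matrix (Fin n × Fin p) (Fin n × Fin p) ℝ) - Zdiag) with hDdef
  have hMh : Mᴴ = M := by
    rw [hMdef, Matrix.conjTranspose_add, Matrix.conjTranspose_sub, Matrix.conjTranspose_one,
      Matrix.conjTranspose_smul, hZh, hZdh]
    norm_num
  have hDh : Dᴴ = D := by
    rw [hDdef, Matrix.conjTranspose_add, Matrix.conjTranspose_smul, Matrix.conjTranspose_sub,
      Matrix.conjTranspose_one, hBh, hZdh]
    norm_num
  -- PSD of M and 1 - Z
  have hMpsd : M.PosSemidef := by
    rw [hMdef, hZ, hZdiag]; exact M_kron_psd W hsymm hnonneg hrow hcol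
  have hIZpsd : ((1 : Matrix (Fin n × Fin p) (Fin n × Fin p) ℝ) - Z).PosSemidef := by
    rw [hZ]; exact one_sub_kron_psd W hsymm hnonneg hrow hcol
  -- diagonal comparison matrices
  have hUB1 : ((1 - δ) • (1 : Matrix (Fin n × Fin p) (Fin n × Fin p) ℝ)
      - ((1 : Matrix (Fin n × Fin p) (Fin n × Fin p) ℝ) - Zdiag)).PosSemidef := by
    have hid : (1 - δ) • (1 : Matrix (Fin n × Fin p) (Fin n × Fin p) ℝ)
        - ((1 : Matrix (Fin n × Fin p) (Fin n × Fin p) ℝ) - Zdiag)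
        = Matrix.diagonal (fun q : Fin n × Fin p => W q.1 q.1 - δ) := by
      rw [hZdiag]
      ext q r
      by_cases h : q = r <;>
        simp [h, Matrix.one_apply, Matrix.diagonal_apply, Matrix.sub_apply, Matrix.smul_apply] <;>
        ring
    rw [hid]
    exact Matrix.posSemidef_diagonal_iff.mpr fun q => by have := (hdiag q.1).1; linarith
  have hLB1 : (((1 : Matrix (Fin n × Fin p) (Fin n × Fin p) ℝ) - Zdiag)
      - (1 - Δ) • (1 : Matrix (Fin n × Fin p) (Fin n × Fin p) ℝ)).PosSemidef := by
    have hid : ((1 : Matrix (Fin n × Fin p) (Fin n × Fin p) ℝ) - Zdiag)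
        - (1 - Δ) • (1 : Matrix (Fin n × Fin p) (Fin n × Fin p) ℝ)
        = Matrix.diagonal (fun q : Fin n × Fin p => Δ - W q.1 q.1) := by
      rw [hZdiag]
      ext q r
      by_cases h : q = r <;>
        simp [h, Matrix.one_apply, Matrix.diagonal_apply, Matrix.sub_apply, Matrix.smul_apply] <;>
        ring
    rw [hid]
    exact Matrix.posSemidef_diagonal_iff.mpr fun q => by have := (hdiag q.1).2; linarith
  have hZdδ : (Zdiag - δ • (1 : Matrix (Fin n × Fin p) (Fin n × Fin p) ℝ)).PosSemidef := by
    have hid : Zdiag - δ • (1 : Matrix (Fin n × Fin p) (Fin n × Fin p) ℝ)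
        = Matrix.diagonal (fun q : Fin n × Fin p => W q.1 q.1 - δ) := by
      rw [hZdiag]
      ext q r
      by_cases h : q = r <;>
        simp [h, Matrix.one_apply, Matrix.diagonal_apply, Matrix.sub_apply, Matrix.smul_apply]
    rw [hid]
    exact Matrix.posSemidef_diagonal_iff.mpr fun q => by have := (hdiag q.1).1; linarith
  -- bounds on D
  have hDub : ((2 * α * (1 - δ) + Ψ) • (1 : Matrix (Fin n × Fin p) (Fin n × Fin p) ℝ)
      - D).PosSemidef := by
    have hid : (2 * α * (1 - δ) + Ψ) • (1 : Matrix (Fin n × Fin p) (Fin n × Fin p) ℝ) - D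
        = (Ψ • (1 : Matrix (Fin n × Fin p) (Fin n × Fin p) ℝ) - B)
          + (2 * α) • ((1 - δ) • (1 : Matrix (Fin n × Fin p) (Fin n × Fin p) ℝ)
            - ((1 : Matrix (Fin n × Fin p) (Fin n × Fin p) ℝ) - Zdiag)) := by
      rw [hDdef]; module
    rw [hid]
    exact hBup.add (psd_smul (by linarith) hUB1)
  have hDlb : (D - (2 * α * (1 - Δ) + ψ) • (1 : Matrix (Fin n × Fin p) (Fin n × Fin p) ℝ)).PosSemidef := by
    have hid : D - (2 * α * (1 - Δ) + ψ) • (1 : Matrix (Fin n × Fin p) (Fin n × Fin p) ℝ)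
        = (B - ψ • (1 : Matrix (Fin n × Fin p) (Fin n × Fin p) ℝ))
          + (2 * α) • (((1 : Matrix (Fin n × Fin p) (Fin n × Fin p) ℝ) - Zdiag)
            - (1 - Δ) • (1 : Matrix (Fin n × Fin p) (Fin n × Fin p) ℝ)) := by
      rw [hDdef]; module
    rw [hid]
    exact hBlow.add (psd_smul (by linarith) hLB1)
  -- the key inequality α M ⪯ ρ D
  have hKey : ((2 * α * (1 - δ)) • D - ((2 * α * (1 - δ) + ψ) * α) • M).PosSemidef := by
    have hid : (2 * α * (1 - δ)) • D - ((2 * α * (1 - δ) + ψ) * α) • M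
        = (2 * α * (1 - δ)) • (B - ψ • (1 : Matrix (Fin n × Fin p) (Fin n × Fin p) ℝ))
          + ((2 * α * (1 - δ) + ψ) * α) • ((1 : Matrix (Fin n × Fin p) (Fin n × Fin p) ℝ) - Z)
          + (2 * ψ * α) • (Zdiag - δ • (1 : Matrix (Fin n × Fin p) (Fin n × Fin p) ℝ)) := by
      rw [hDdef, hMdef]; module
    rw [hid]
    exact ((psd_smul hd1pos.le hBlow).add
      (psd_smul (by positivity) hIZpsd)).add (psd_smul (by positivity) hZdδ)
  -- facts about S and D
  have hSSD : S * S * D = 1 := hSS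
  have hDSS : D * (S * S) = 1 := by
    have h2 := congrArg Matrix.conjTranspose hSSD
    rwa [Matrix.conjTranspose_mul, Matrix.conjTranspose_mul, hSh, hDh,
      Matrix.conjTranspose_one] at h2
  have hbS : S * (S * D) = 1 := by rw [← Matrix.mul_assoc]; exact hSSD
  have hcS : (D * S) * S = 1 := by rw [Matrix.mul_assoc]; exact hDSS
  have hDScomm : D * S = S * D := by
    calc D * S = (D * S) * (S * (S * D)) := by rw [hbS, mul_one]
    _ = ((D * S) * S) * (S * D) := by simp only [Matrix.mul_assoc]
    _ = S * D := by rw [hcS, one_mul]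
  have hSDS : S * D * S = 1 := by rw [Matrix.mul_assoc, hDScomm, ← Matrix.mul_assoc]; exact hSSD
  -- the matrix E
  set E : Matrix (Fin n × Fin p) (Fin n × Fin p) ℝ := S * (α • M) * S with hEdef
  have hEpsd : E.PosSemidef := psd_conj (psd_smul hα.le hMpsd) hSh
  have hEub : (rho • (1 : Matrix (Fin n × Fin p) (Fin n × Fin p) ℝ) - E).PosSemidef := by
    have hsc1 : (1 / (2 * α * (1 - δ) + ψ)) * (2 * α * (1 - δ)) = rho := by
      rw [hrho_eq]; field_simp
    have hsc2 : (1 / (2 * α * (1 - δ) + ψ)) * ((2 * α * (1 - δ) + ψ) * α) = α := by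
      field_simp
    have h1 : rho • D - α • M = (1 / (2 * α * (1 - δ) + ψ))
        • ((2 * α * (1 - δ)) • D - ((2 * α * (1 - δ) + ψ) * α) • M) := by
      rw [smul_sub, smul_smul, smul_smul, hsc1, hsc2]
    have h2 : (rho • D - α • M).PosSemidef := by
      rw [h1]; exact psd_smul (by positivity) hKey
    have h3 : rho • (1 : Matrix (Fin n × Fin p) (Fin n × Fin p) ℝ) - E
        = S * (rho • D - α • M) * S := by
      rw [hEdef]
      simp only [Matrix.mul_sub, Matrix.sub_mul, Matrix.mul_smul, Matrix.smul_mul, hSDS]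
    rw [h3]
    exact psd_conj h2 hSh
  -- the partial sum
  set c : ℝ := ∑ k ∈ Finset.range (K + 1), rho ^ k with hcdef
  have hc0 : 0 ≤ c := Finset.sum_nonneg fun k _ => pow_nonneg hrho0 k
  set Ssum : Matrix (Fin n × Fin p) (Fin n × Fin p) ℝ := ∑ k ∈ Finset.range (K + 1), E ^ k
    with hSsumdef
  have hsum_lb : (Ssum - 1).PosSemidef := by
    have hid : Ssum - 1 = ∑ k ∈ Finset.range K, E ^ (k + 1) := by
      rw [hSsumdef, Finset.sum_range_succ']
      simp
    rw [hid]
    exact psd_sum fun k _ => hEpsd.pow (k + 1)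
  have hsum_ub : (c • (1 : Matrix (Fin n × Fin p) (Fin n × Fin p) ℝ) - Ssum).PosSemidef := by
    have hid : c • (1 : Matrix (Fin n × Fin p) (Fin n × Fin p) ℝ) - Ssum
        = ∑ k ∈ Finset.range (K + 1),
          (rho ^ k • (1 : Matrix (Fin n × Fin p) (Fin n × Fin p) ℝ) - E ^ k) := by
      rw [Finset.sum_sub_distrib, hcdef, hSsumdef, Finset.sum_smul]
    rw [hid]
    exact psd_sum fun k _ => psd_pow_bound hrho0 hEpsd hEub k
  have hG : GinvK = S * Ssum * S := rfl
  -- lower bound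
  have hlam_eq : lam = 1 / (2 * α * (1 - δ) + Ψ) := rfl
  have hlam0 : 0 ≤ lam := by rw [hlam_eq]; positivity
  have hSS_lb : (S * S - lam • (1 : Matrix (Fin n × Fin p) (Fin n × Fin p) ℝ)).PosSemidef := by
    have e : S * (lam • ((2 * α * (1 - δ) + Ψ) • (1 : Matrix (Fin n × Fin p) (Fin n × Fin p) ℝ) - D)) * S
        = lam • ((2 * α * (1 - δ) + Ψ) • (S * S) - 1) := by
      rw [Matrix.mul_smul, Matrix.smul_mul, Matrix.mul_sub, Matrix.sub_mul, Matrix.mul_smul,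
        Matrix.smul_mul, Matrix.mul_one, hSDS]
    have hid : S * S - lam • (1 : Matrix (Fin n × Fin p) (Fin n × Fin p) ℝ)
        = S * (lam • ((2 * α * (1 - δ) + Ψ) • (1 : Matrix (Fin n × Fin p) (Fin n × Fin p) ℝ) - D)) * S := by
      rw [e, smul_sub, smul_smul,
        show lam * (2 * α * (1 - δ) + Ψ) = 1 by rw [hlam_eq]; field_simp, one_smul]
    rw [hid]
    exact psd_conj (psd_smul hlam0 hDub) hSh
  have hlow : (GinvK - lam • (1 : Matrix (Fin n × Fin p) (Fin n × Fin p) ℝ)).PosSemidef := by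
    have hid : GinvK - lam • (1 : Matrix (Fin n × Fin p) (Fin n × Fin p) ℝ)
        = S * (Ssum - 1) * S + (S * S - lam • (1 : Matrix (Fin n × Fin p) (Fin n × Fin p) ℝ)) := by
      rw [hG, Matrix.mul_sub, Matrix.sub_mul, Matrix.mul_one]
      abel
    rw [hid]
    exact (psd_conj hsum_lb hSh).add hSS_lb
  -- upper bound
  have hLam_eq : Lam = c * (1 / (2 * α * (1 - Δ) + ψ)) := by
    show (1 - rho ^ (K + 1)) / ((1 - rho) * (2 * α * (1 - Δ) + ψ)) = _
    rw [hcdef, geom_sum_eq hrhone]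
    have h1 : (1:ℝ) - rho ≠ 0 := ne_of_gt (by linarith)
    have h2 : rho - 1 ≠ 0 := sub_ne_zero.mpr hrhone
    field_simp
    ring
  have hup_part : (Lam • (1 : Matrix (Fin n × Fin p) (Fin n × Fin p) ℝ)
      - c • (S * S)).PosSemidef := by
    have e : S * ((c * (1 / (2 * α * (1 - Δ) + ψ)))
          • (D - (2 * α * (1 - Δ) + ψ) • (1 : Matrix (Fin n × Fin p) (Fin n × Fin p) ℝ))) * S
        = (c * (1 / (2 * α * (1 - Δ) + ψ)))
          • (1 - (2 * α * (1 - Δ) + ψ) • (S * S)) := by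
      rw [Matrix.mul_smul, Matrix.smul_mul, Matrix.mul_sub, Matrix.sub_mul, hSDS,
        Matrix.mul_smul, Matrix.smul_mul, Matrix.mul_one]
    have hid : Lam • (1 : Matrix (Fin n × Fin p) (Fin n × Fin p) ℝ) - c • (S * S)
        = S * ((c * (1 / (2 * α * (1 - Δ) + ψ)))
          • (D - (2 * α * (1 - Δ) + ψ) • (1 : Matrix (Fin n × Fin p) (Fin n × Fin p) ℝ))) * S := by
      rw [e, smul_sub, smul_smul,
        show c * (1 / (2 * α * (1 - Δ) + ψ)) * (2 * α * (1 - Δ) + ψ) = c by field_simp, hLam_eq]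
    rw [hid]
    exact psd_conj (psd_smul (mul_nonneg hc0 (by positivity)) hDlb) hSh
  have hup : (Lam • (1 : Matrix (Fin n × Fin p) (Fin n × Fin p) ℝ) - GinvK).PosSemidef := by
    have hid : Lam • (1 : Matrix (Fin n × Fin p) (Fin n × Fin p) ℝ) - GinvK
        = S * (c • (1 : Matrix (Fin n × Fin p) (Fin n × Fin p) ℝ) - Ssum) * S
          + (Lam • (1 : Matrix (Fin n × Fin p) (Fin n × Fin p) ℝ) - c • (S * S)) := by
      rw [hG, Matrix.mul_sub, Matrix.sub_mul, Matrix.mul_smul, Matrix.smul_mul, Matrix.mul_one]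
      abel
    rw [hid]
    exact (psd_conj hsum_ub hSh).add hup_part
  exact ⟨hlow, hup⟩
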